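/- For the cycle graph $C_n$ ($n\ge 1$), the v-number of its binomial edge ideal satisfies $\mathrm{v}(J_{C_n}) \le \lceil 2n/3 \rceil$. -/

import Mathlib

open MvPolynomial

set_option synthInstance.maxHeartbeats 1000000

namespace Paper

noncomputable section

variable (K : Type) [Field K]

/-- The v-number of a graded ideal `I`: the least `d` such that there is a homogeneous
polynomial `f` of degree `d` with `(I : f)` an associated prime of `R/I`. -/
def vNumber {σ : Type} (I : Ideal (MvPolynomial σ K)) : ℕ :=
  sInf {d : ℕ | ∃ f : MvPolynomial σ K, f.IsHomogeneous d ∧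
    IsAssociatedPrime (Submodule.colon I (Ideal.span {f})) (MvPolynomial σ K ⧸ I)}

/-- The local v-number of `I` at a prime `P`. -/
def vLocal {σ : Type} (I P : Ideal (MvPolynomial σ K)) : ℕ :=
  sInf {d : ℕ | ∃ f : MvPolynomial σ K, f.IsHomogeneous d ∧
    Submodule.colon I (Ideal.span {f}) = P}

/-- The edge binomial `f_{ij} = x_i y_j - x_j y_i`. -/
def bedge {V : Type} (i j : V) : MvPolynomial (V ⊕ V) K :=
  X (Sum.inl i) * X (Sum.inr j) - X (Sum.inl j) * X (Sum.inr i)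

/-- The binomial edge ideal of a graph `G`. -/
def beIdeal {V : Type} (G : SimpleGraph V) : Ideal (MvPolynomial (V ⊕ V) K) :=
  Ideal.span {p | ∃ i j : V, G.Adj i j ∧ p = bedge K i j}

/-- The (monomial) edge ideal of a graph `G`. -/
def edgeIdealM {V : Type} (G : SimpleGraph V) : Ideal (MvPolynomial V K) :=
  Ideal.span {p | ∃ i j : V, G.Adj i j ∧ p = X i * X j}

/-- `i` and `j` are connected by a walk in `G` avoiding the set `S`. -/
def ReachAvoid {V : Type} (G : SimpleGraph V) (S : Set V) (i j : V) : Prop :=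
  ∃ w : G.Walk i j, ∀ v ∈ w.support, v ∉ S

/-- The disjoint union of complete graphs on the connected components of `G ∖ S`. -/
def tildeG {V : Type} (G : SimpleGraph V) (S : Set V) : SimpleGraph V where
  Adj i j := i ≠ j ∧ ReachAvoid G S i j
  symm := ⟨by
    rintro i j ⟨hne, w, hw⟩
    exact ⟨hne.symm, w.reverse, by
      intro v hv
      exact hw v (by simpa [SimpleGraph.Walk.support_reverse] using hv)⟩⟩
  loopless := ⟨fun i h => h.1 rfl⟩

/-- The minimal prime `P_S` of the binomial edge ideal corresponding to a cut set `S`. -/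
def PSIdeal {V : Type} (G : SimpleGraph V) (S : Set V) : Ideal (MvPolynomial (V ⊕ V) K) :=
  Ideal.span ((fun i => (X (Sum.inl i) : MvPolynomial (V ⊕ V) K)) '' S ∪
      (fun i => (X (Sum.inr i) : MvPolynomial (V ⊕ V) K)) '' S)
    ⊔ beIdeal K (tildeG G S)

/-- Number of connected components of the induced subgraph on the complement of `S`. -/
def numComp {V : Type} (G : SimpleGraph V) (S : Set V) : ℕ :=
  Nat.card ((G.induce Sᶜ).ConnectedComponent)

/-- `S` is a cut set of `G`. -/
def IsCutSet {V : Type} (G : SimpleGraph V) (S : Set V) : Prop :=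
  ∀ s ∈ S, numComp G (S \ {s}) < numComp G S

/-- `v` is a cut vertex of `G`. -/
def IsCutVertex {V : Type} (G : SimpleGraph V) (v : V) : Prop :=
  numComp G (∅ : Set V) < numComp G {v}

/-- `G` is a cone graph: some vertex is adjacent to all others. -/
def IsConeGraph {V : Type} (G : SimpleGraph V) : Prop :=
  ∃ v : V, ∀ u : V, u ≠ v → G.Adj v u

/-- `G` (with its labelling by `Fin n`) is a closed graph. -/
def IsClosedGraph {n : ℕ} (G : SimpleGraph (Fin n)) : Prop :=
  ∀ i j k : Fin n, i < j → j < k → G.Adj i k → G.Adj i j ∧ G.Adj j k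

/-- `R/I` is Cohen-Macaulay: there is a regular sequence (inside the irrelevant
maximal ideal) on `R/I` whose length is the Krull dimension of `R/I`. -/
def IsCMQuot {σ : Type} (I : Ideal (MvPolynomial σ K)) : Prop :=
  ∃ rs : List (MvPolynomial σ K),
    (∀ f ∈ rs, f ∈ Ideal.span (Set.range (X : σ → MvPolynomial σ K))) ∧
    RingTheory.Sequence.IsRegular (MvPolynomial σ K ⧸ I)
      (rs.map (Ideal.Quotient.mk I)) ∧
    ((rs.length : ℕ) : WithBot (WithTop ℕ)) = ringKrullDim (MvPolynomial σ K ⧸ I)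

section Regularity

variable {σ : Type} [Fintype σ] [DecidableEq σ]

/-- An arbitrary linear order on a finite type. -/
def fintypeLO (σ : Type) [Fintype σ] [DecidableEq σ] : LinearOrder σ :=
  LinearOrder.lift' (Fintype.equivFin σ) (Fintype.equivFin σ).injective

/-- Term of homological degree `i` of the Koszul complex of `R/I` with respect to all the
variables; its homology computes `Tor_i(R/I, K)`. -/
abbrev KC (I : Ideal (MvPolynomial σ K)) (i : ℕ) : Type :=
  {T : Finset σ // T.card = i} → MvPolynomial σ K ⧸ I

/-- The Koszul differential. -/
def koszD (I : Ideal (MvPolynomial σ K)) (i : ℕ) (f : KC K I (i + 1)) : KC K I i :=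
  letI LO := fintypeLO σ
  letI : (p : Prop) → Decidable p := Classical.propDecidable
  fun T => ∑ t ∈ (Finset.univ \ T.1).attach,
    ((-1 : MvPolynomial σ K ⧸ I) ^ ((T.1.filter (fun a => LO.lt a t.1)).card)) *
      (Ideal.Quotient.mk I (X t.1) *
        f ⟨insert t.1 T.1, by
          rw [Finset.card_insert_of_notMem (Finset.mem_sdiff.mp t.2).2, T.2]⟩)

/-- Being a cycle in the Koszul complex. -/
def isCycle (I : Ideal (MvPolynomial σ K)) : (i : ℕ) → KC K I i → Prop
  | 0, _ => True
  | (i + 1), f => koszD K I i f = 0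

/-- Nonvanishing of the graded Betti number `β_{i,j}(R/I)`: the `i`-th Koszul homology has a
nonzero class of internal degree `j`. -/
def bettiNe (I : Ideal (MvPolynomial σ K)) (i j : ℕ) : Prop :=
  ∃ f : KC K I i,
    (∀ T, ∃ p : MvPolynomial σ K, p.IsHomogeneous (j - i) ∧ Ideal.Quotient.mk I p = f T) ∧
    isCycle K I i f ∧ ¬ ∃ g : KC K I (i + 1), koszD K I i g = f

/-- The Castelnuovo-Mumford regularity of `R/I`, as `max { j - i : β_{i,j}(R/I) ≠ 0 }`. -/
def reg (I : Ideal (MvPolynomial σ K)) : ℕ :=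
  sSup {r : ℕ | ∃ i j : ℕ, j = i + r ∧ bettiNe K I i j}

end Regularity

end

end Paper

namespace Paper

/-!
Fix a set `S` of vertices and a labelling `ρ` of the vertices that is constant along the edges
of `G ∖ S`. Send `x_s, y_s ↦ 0` for `s ∈ S` and otherwise `x_i ↦ t_{ρ i} u_i`, `y_i ↦ u_i`.
The kernel of this monomial map is the prime `P = (x_s, y_s : s ∈ S) + (f_{ij} : ρ i = ρ j)`:
the kernel of a monomial map is spanned by binomials with equal images, and two monomials with
the same image are joined by exchanges `x_i y_j ↦ x_j y_i` inside a block. It contains `J_G`, so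
for a homogeneous `f` not in it with `P f ⊆ J_G`, one has `J_G : f = P` and `v(J_G) ≤ deg f`.

For `C_n`, cut at the vertices `≡ 1 mod 3` and take for `f` the product of the binomials
`f_{s-1,s+1}` over the cut vertices `s`, which gives `x_s f, y_s f ∈ J_G` by
`x_s f_{ab} = x_a f_{sb} + x_b f_{as}`. Adjusting the end of the cycle according to `n mod 3`
gives degree `⌈2n/3⌉`; for `n ≤ 3` the graph is complete and `J_G` is itself prime.
-/

noncomputable section

open Finsupp

variable (K : Type) [Field K]

lemma vNumber_le_of_isPrime_colon {σ : Type} (I : Ideal (MvPolynomial σ K))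
    {f : MvPolynomial σ K} {d : ℕ} (hf : f.IsHomogeneous d) (hP : (I.colon (Ideal.span {f})).IsPrime) :
    vNumber K I ≤ d := by
  refine Nat.sInf_le ⟨f, hf, hP, Submodule.Quotient.mk f, ?_⟩
  convert hP.radical.symm using 2
  ext r
  rw [Submodule.mem_colon_singleton, ← Submodule.Quotient.mk_smul, Submodule.mem_bot,
    Submodule.Quotient.mk_eq_zero, Ideal.mem_colon_span_singleton, smul_eq_mul]

lemma colon_span_singleton_eq_ker {A B F : Type*} [CommRing A] [CommRing B] [IsDomain B]
    [FunLike F A B] [RingHomClass F A B] (φ : F) {I : Ideal A} {f : A} (hI : I ≤ RingHom.ker φ)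
    (hf : φ f ≠ 0) (hker : ∀ r ∈ RingHom.ker φ, r * f ∈ I) :
    I.colon (Ideal.span {f}) = RingHom.ker φ := by
  ext r
  rw [Ideal.mem_colon_span_singleton]
  refine ⟨fun h => ?_, hker r⟩
  have hrf : φ r * φ f = 0 := by rw [← map_mul]; exact hI h
  exact (mul_eq_zero.mp hrf).resolve_right hf

section MonomialMap

variable {σ τ : Type}

def killVars (T : Set σ) : MvPolynomial σ K →ₐ[K] MvPolynomial σ K :=
  aeval (Tᶜ.indicator X)

lemma killVars_X_of_mem {T : Set σ} {v : σ} (hv : v ∈ T) : killVars K T (X v) = 0 := by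
  simp [killVars, hv]

lemma killVars_X_of_notMem {T : Set σ} {v : σ} (hv : v ∉ T) : killVars K T (X v) = X v := by
  simp [killVars, hv]

lemma sub_killVars_mem_span (T : Set σ) (p : MvPolynomial σ K) :
    p - killVars K T p ∈ Ideal.span (X '' T) := by
  induction p using MvPolynomial.induction_on with
  | C a => simp [killVars]
  | add p q hp hq =>
    rw [map_add, add_sub_add_comm]
    exact add_mem hp hq
  | mul_X p v hp =>
    rw [map_mul, show p * X v - killVars K T p * killVars K T (X v) =
      (p - killVars K T p) * X v + killVars K T p * (X v - killVars K T (X v)) by ring]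
    refine add_mem (Ideal.mul_mem_right _ _ hp) (Ideal.mul_mem_left _ _ ?_)
    by_cases hv : v ∈ T
    · rw [killVars_X_of_mem K hv, sub_zero]
      exact Ideal.subset_span ⟨v, hv, rfl⟩
    · rw [killVars_X_of_notMem K hv, sub_self]
      exact zero_mem _

lemma aeval_monomial_monomial (e : σ → τ →₀ ℕ) (α : σ →₀ ℕ) (c : K) :
    aeval (fun v => monomial (e v) (1 : K)) (monomial α c) =
      monomial (linearCombination ℕ e α) c := by
  rw [aeval_monomial, linearCombination_apply, monomial_finsupp_sum_index]
  simp [monomial_pow]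

lemma ker_aeval_monomial_le (e : σ → τ →₀ ℕ) (I : Ideal (MvPolynomial σ K))
    (hI : ∀ α β, linearCombination ℕ e α = linearCombination ℕ e β →
      monomial α (1 : K) - monomial β 1 ∈ I) :
    RingHom.ker (aeval (fun v => monomial (e v) (1 : K))) ≤ I := by
  classical
  intro p hp
  set E := linearCombination ℕ e
  have hfiber : ∀ γ, ∑ α ∈ p.support with E α = γ, coeff α p = 0 := by
    intro γ
    have h := congrArg (coeff γ) (RingHom.mem_ker.mp hp)
    rw [← p.support_sum_monomial_coeff, map_sum, coeff_sum] at h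
    simp only [aeval_monomial_monomial, coeff_monomial] at h
    rwa [Finset.sum_filter]
  rw [← p.support_sum_monomial_coeff,
    ← Finset.sum_fiberwise_of_maps_to (fun α hα => Finset.mem_image_of_mem E hα)]
  refine Ideal.sum_mem _ fun γ hγ => ?_
  obtain ⟨α₀, -, rfl⟩ := Finset.mem_image.mp hγ
  have hsplit : ∑ α ∈ p.support with E α = E α₀, monomial α (coeff α p) =
      ∑ α ∈ p.support with E α = E α₀, C (coeff α p) * (monomial α 1 - monomial α₀ 1) := by
    simp only [mul_sub, C_mul_monomial, mul_one, Finset.sum_sub_distrib]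
    rw [← map_sum (monomial α₀), hfiber, map_zero, sub_zero]
  rw [hsplit]
  exact Ideal.sum_mem _ fun α hα => Ideal.mul_mem_left _ _ (hI _ _ (Finset.mem_filter.mp hα).2)

end MonomialMap

section BlockParam

variable {V ι : Type}

def blockExp (ρ : V → ι) : V ⊕ V → (ι ⊕ V →₀ ℕ)
  | Sum.inl i => single (Sum.inl (ρ i)) 1 + single (Sum.inr i) 1
  | Sum.inr i => single (Sum.inr i) 1

/-- `x_i ↦ t_{ρ i} u_i`, `y_i ↦ u_i`, where `t_c = X (Sum.inl c)` and `u_i = X (Sum.inr i)`. -/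
def blockParam (ρ : V → ι) : MvPolynomial (V ⊕ V) K →ₐ[K] MvPolynomial (ι ⊕ V) K :=
  aeval fun v => monomial (blockExp ρ v) 1

def blockIdeal (ρ : V → ι) : Ideal (MvPolynomial (V ⊕ V) K) :=
  Ideal.span {p | ∃ i j, ρ i = ρ j ∧ p = bedge K i j}

variable (ρ : V → ι)

lemma blockParam_X_inl (i : V) :
    blockParam K ρ (X (Sum.inl i)) = X (Sum.inl (ρ i)) * X (Sum.inr i) := by
  rw [blockParam, aeval_X, blockExp, X, X, monomial_mul, one_mul]

lemma blockParam_X_inr (i : V) : blockParam K ρ (X (Sum.inr i)) = X (Sum.inr i) := by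
  rw [blockParam, aeval_X, blockExp, X]

variable [Fintype V]

lemma linearCombination_blockExp_inr (α : V ⊕ V →₀ ℕ) (i : V) :
    linearCombination ℕ (blockExp ρ) α (Sum.inr i) = α (Sum.inl i) + α (Sum.inr i) := by
  classical
  rw [linearCombination_apply, Finsupp.sum_apply, Finsupp.sum_fintype _ _ (by simp),
    Fintype.sum_sum_type]
  simp [blockExp, single_apply]

lemma linearCombination_blockExp_inl [DecidableEq ι] (α : V ⊕ V →₀ ℕ) (c : ι) :
    linearCombination ℕ (blockExp ρ) α (Sum.inl c) = ∑ i with ρ i = c, α (Sum.inl i) := by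
  classical
  rw [linearCombination_apply, Finsupp.sum_apply, Finsupp.sum_fintype _ _ (by simp),
    Fintype.sum_sum_type, Finset.sum_filter]
  simp [blockExp, single_apply]

end BlockParam

section Exchange

variable {V ι : Type} [Fintype V] [DecidableEq ι] (ρ : V → ι) {α β : V ⊕ V →₀ ℕ}

lemma eq_of_linearCombination_blockExp_eq
    (h : linearCombination ℕ (blockExp ρ) α = linearCombination ℕ (blockExp ρ) β)
    (hle : ∀ i, α (Sum.inl i) ≤ β (Sum.inl i)) : α = β := by
  have hx : ∀ i, α (Sum.inl i) = β (Sum.inl i) := fun i =>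
    (Finset.sum_eq_sum_iff_of_le (s := {k | ρ k = ρ i}) fun k _ => hle k).mp
      (by rw [← linearCombination_blockExp_inl, ← linearCombination_blockExp_inl, h]) i (by simp)
  ext (i | i)
  · exact hx i
  · have := hx i
    have : α (Sum.inl i) + α (Sum.inr i) = β (Sum.inl i) + β (Sum.inr i) := by
      rw [← linearCombination_blockExp_inr, ← linearCombination_blockExp_inr, h]
    omega

/-- One exchange `x_i y_j ↦ x_j y_i` inside a block, moving `α` towards `β`. -/
lemma exists_exchange_of_lt
    (h : linearCombination ℕ (blockExp ρ) α = linearCombination ℕ (blockExp ρ) β)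
    {i : V} (hi : β (Sum.inl i) < α (Sum.inl i)) :
    ∃ α', linearCombination ℕ (blockExp ρ) α' = linearCombination ℕ (blockExp ρ) α ∧
      ∑ k, (α' (Sum.inl k) - β (Sum.inl k)) < ∑ k, (α (Sum.inl k) - β (Sum.inl k)) ∧
      monomial α (1 : K) - monomial α' 1 ∈ blockIdeal K ρ := by
  classical
  obtain ⟨j, hj, hlt⟩ : ∃ j ∈ Finset.univ.filter (ρ · = ρ i), α (Sum.inl j) < β (Sum.inl j) := by
    by_contra! hge
    refine (Finset.sum_lt_sum hge ⟨i, by simp, hi⟩).ne ?_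
    rw [← linearCombination_blockExp_inl, ← linearCombination_blockExp_inl, h]
  have hρ : ρ j = ρ i := (Finset.mem_filter.mp hj).2
  have hij : i ≠ j := by rintro rfl; omega
  obtain ⟨γ, rfl⟩ : ∃ γ, α = single (Sum.inl i) 1 + single (Sum.inr j) 1 + γ := by
    have hxi : 1 ≤ α (Sum.inl i) := by omega
    have hyj : 1 ≤ α (Sum.inr j) := by
      have : α (Sum.inl j) + α (Sum.inr j) = β (Sum.inl j) + β (Sum.inr j) := by
        rw [← linearCombination_blockExp_inr, ← linearCombination_blockExp_inr, h]
      omega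
    refine le_iff_exists_add.mp fun v => ?_
    rcases v with v | v <;>
      simp only [Finsupp.add_apply, single_apply, Sum.inl.injEq, Sum.inr.injEq, reduceCtorEq,
        if_false] <;> split_ifs <;> subst_vars <;> omega
  refine ⟨single (Sum.inl j) 1 + single (Sum.inr i) 1 + γ, ?_, ?_, ?_⟩
  · simp only [map_add, linearCombination_single, blockExp, hρ, one_smul]
    abel
  · refine Finset.sum_lt_sum (fun k _ => ?_) ⟨i, Finset.mem_univ _, ?_⟩ <;>
      simp only [Finsupp.add_apply, single_apply] at hi hlt ⊢ <;> split_ifs <;> simp_all <;> omega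
  · rw [show monomial (single (Sum.inl i) 1 + single (Sum.inr j) 1 + γ) (1 : K) -
        monomial (single (Sum.inl j) 1 + single (Sum.inr i) 1 + γ) 1 = bedge K i j * monomial γ 1 by
      simp only [bedge, X, monomial_mul, mul_one, sub_mul]]
    exact Ideal.mul_mem_right _ _ (Ideal.subset_span ⟨i, j, hρ.symm, rfl⟩)

lemma monomial_sub_mem_blockIdeal
    (h : linearCombination ℕ (blockExp ρ) α = linearCombination ℕ (blockExp ρ) β) :
    monomial α (1 : K) - monomial β 1 ∈ blockIdeal K ρ := by
  induction hN : ∑ i, (α (Sum.inl i) - β (Sum.inl i)) using Nat.strong_induction_on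
    generalizing α with
  | _ N ih =>
  by_cases hex : ∃ i, β (Sum.inl i) < α (Sum.inl i)
  · obtain ⟨i, hi⟩ := hex
    obtain ⟨α', hα', hlt, hmem⟩ := exists_exchange_of_lt K ρ h hi
    rw [← sub_add_sub_cancel _ (monomial α' 1)]
    exact add_mem hmem (ih _ (hN ▸ hlt) (hα'.trans h) rfl)
  · simp only [not_exists, not_lt] at hex
    rw [eq_of_linearCombination_blockExp_eq ρ h hex, sub_self]
    exact zero_mem _

end Exchange

lemma ker_blockParam_le {V ι : Type} [Fintype V] (ρ : V → ι) :
    RingHom.ker (blockParam K ρ) ≤ blockIdeal K ρ := by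
  classical
  exact ker_aeval_monomial_le K _ _ fun _ _ h => monomial_sub_mem_blockIdeal K ρ h

section ToricMap

variable {V ι : Type} (S : Set V) (ρ : V → ι)

def cutVars : Set (V ⊕ V) := Sum.inl '' S ∪ Sum.inr '' S

def toricMap : MvPolynomial (V ⊕ V) K →ₐ[K] MvPolynomial (ι ⊕ V) K :=
  (blockParam K ρ).comp (killVars K (cutVars S))

lemma ker_toricMap_le [Fintype V] :
    RingHom.ker (toricMap K S ρ) ≤ Ideal.span (X '' cutVars S) ⊔ blockIdeal K ρ := by
  intro p hp
  rw [← sub_add_cancel p (killVars K (cutVars S) p)]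
  exact Submodule.add_mem_sup (sub_killVars_mem_span K _ p) (ker_blockParam_le K ρ hp)

variable {S ρ} {i j : V}

lemma toricMap_X_inl_of_mem (hi : i ∈ S) : toricMap K S ρ (X (Sum.inl i)) = 0 := by
  simp [toricMap, killVars_X_of_mem K (show Sum.inl i ∈ cutVars S from .inl ⟨i, hi, rfl⟩)]

lemma toricMap_X_inr_of_mem (hi : i ∈ S) : toricMap K S ρ (X (Sum.inr i)) = 0 := by
  simp [toricMap, killVars_X_of_mem K (show Sum.inr i ∈ cutVars S from .inr ⟨i, hi, rfl⟩)]

lemma toricMap_X_inl (hi : i ∉ S) :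
    toricMap K S ρ (X (Sum.inl i)) = X (Sum.inl (ρ i)) * X (Sum.inr i) := by
  rw [toricMap, AlgHom.comp_apply, killVars_X_of_notMem K (by simpa [cutVars] using hi)]
  exact blockParam_X_inl K ρ i

lemma toricMap_X_inr (hi : i ∉ S) : toricMap K S ρ (X (Sum.inr i)) = X (Sum.inr i) := by
  rw [toricMap, AlgHom.comp_apply, killVars_X_of_notMem K (by simpa [cutVars] using hi)]
  exact blockParam_X_inr K ρ i

lemma toricMap_bedge (hi : i ∉ S) (hj : j ∉ S) :
    toricMap K S ρ (bedge K i j) =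
      (X (Sum.inl (ρ i)) - X (Sum.inl (ρ j))) * X (Sum.inr i) * X (Sum.inr j) := by
  simp only [bedge, map_sub, map_mul, toricMap_X_inl K hi, toricMap_X_inl K hj,
    toricMap_X_inr K hi, toricMap_X_inr K hj]
  ring

lemma toricMap_bedge_eq_zero (h : i ∈ S ∨ j ∈ S ∨ ρ i = ρ j) :
    toricMap K S ρ (bedge K i j) = 0 := by
  by_cases hi : i ∈ S
  · simp [bedge, toricMap_X_inl_of_mem K hi, toricMap_X_inr_of_mem K hi]
  by_cases hj : j ∈ S
  · simp [bedge, toricMap_X_inl_of_mem K hj, toricMap_X_inr_of_mem K hj]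
  rw [toricMap_bedge K hi hj, (h.resolve_left hi).resolve_left hj, sub_self, zero_mul, zero_mul]

lemma toricMap_bedge_ne_zero (hi : i ∉ S) (hj : j ∉ S) (hρ : ρ i ≠ ρ j) :
    toricMap K S ρ (bedge K i j) ≠ 0 := by
  rw [toricMap_bedge K hi hj]
  refine mul_ne_zero (mul_ne_zero ?_ (X_ne_zero _)) (X_ne_zero _)
  exact sub_ne_zero.mpr fun h => hρ (Sum.inl_injective (X_injective h))

lemma toricMap_X_inl_ne_zero (hi : i ∉ S) : toricMap K S ρ (X (Sum.inl i)) ≠ 0 := by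
  rw [toricMap_X_inl K hi]
  exact mul_ne_zero (X_ne_zero _) (X_ne_zero _)

end ToricMap

section BinomialEdgeIdeal

variable {V : Type} {G : SimpleGraph V} {i j : V}

lemma bedge_self (i : V) : bedge K i i = 0 := sub_self _

lemma bedge_swap (i j : V) : bedge K i j = -bedge K j i := by
  unfold bedge; ring

lemma isHomogeneous_bedge (i j : V) : (bedge K i j).IsHomogeneous 2 :=
  ((isHomogeneous_X K _).mul (isHomogeneous_X K _)).sub
    ((isHomogeneous_X K _).mul (isHomogeneous_X K _))

lemma bedge_mem_beIdeal (h : G.Adj i j) : bedge K i j ∈ beIdeal K G :=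
  Ideal.subset_span ⟨i, j, h, rfl⟩

lemma bedge_mul_mem_of_eq_or_adj (h : i = j ∨ G.Adj i j) (f : MvPolynomial (V ⊕ V) K) :
    bedge K i j * f ∈ beIdeal K G := by
  rcases h with rfl | h
  · simp [bedge_self]
  · exact Ideal.mul_mem_right _ _ (bedge_mem_beIdeal K h)

lemma bedge_mul_mem_of_X_mul_mem {I : Ideal (MvPolynomial (V ⊕ V) K)} {f : MvPolynomial (V ⊕ V) K}
    (hx : X (Sum.inl i) * f ∈ I) (hy : X (Sum.inr i) * f ∈ I) (j : V) : bedge K i j * f ∈ I := by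
  rw [show bedge K i j * f = X (Sum.inr j) * (X (Sum.inl i) * f) -
    X (Sum.inl j) * (X (Sum.inr i) * f) by unfold bedge; ring]
  exact sub_mem (Ideal.mul_mem_left _ _ hx) (Ideal.mul_mem_left _ _ hy)

lemma X_mul_bedge_mem_of_adj {a s b : V} (has : G.Adj a s) (hsb : G.Adj s b) :
    X (Sum.inl s) * bedge K a b ∈ beIdeal K G ∧ X (Sum.inr s) * bedge K a b ∈ beIdeal K G := by
  constructor
  · rw [show X (Sum.inl s) * bedge K a b =
      X (Sum.inl a) * bedge K s b + X (Sum.inl b) * bedge K a s by unfold bedge; ring]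
    exact add_mem (Ideal.mul_mem_left _ _ (bedge_mem_beIdeal K hsb))
      (Ideal.mul_mem_left _ _ (bedge_mem_beIdeal K has))
  · rw [show X (Sum.inr s) * bedge K a b =
      X (Sum.inr a) * bedge K s b + X (Sum.inr b) * bedge K a s by unfold bedge; ring]
    exact add_mem (Ideal.mul_mem_left _ _ (bedge_mem_beIdeal K hsb))
      (Ideal.mul_mem_left _ _ (bedge_mem_beIdeal K has))

lemma X_mul_mem_of_bedge_dvd {a s b : V} (has : G.Adj a s) (hsb : G.Adj s b)
    {f : MvPolynomial (V ⊕ V) K} (hf : bedge K a b ∣ f) :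
    X (Sum.inl s) * f ∈ beIdeal K G ∧ X (Sum.inr s) * f ∈ beIdeal K G := by
  obtain ⟨g, rfl⟩ := hf
  obtain ⟨hx, hy⟩ := X_mul_bedge_mem_of_adj K has hsb
  rw [← mul_assoc, ← mul_assoc]
  exact ⟨Ideal.mul_mem_right _ _ hx, Ideal.mul_mem_right _ _ hy⟩

end BinomialEdgeIdeal

theorem vNumber_beIdeal_le_of_cut {V ι : Type} [Fintype V] (G : SimpleGraph V) (S : Set V)
    (ρ : V → ι) {f : MvPolynomial (V ⊕ V) K} {d : ℕ} (hf : f.IsHomogeneous d)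
    (hG : ∀ i j, G.Adj i j → i ∈ S ∨ j ∈ S ∨ ρ i = ρ j)
    (hS : ∀ s ∈ S, X (Sum.inl s) * f ∈ beIdeal K G ∧ X (Sum.inr s) * f ∈ beIdeal K G)
    (hblock : ∀ i j, i ∉ S → j ∉ S → ρ i = ρ j → bedge K i j * f ∈ beIdeal K G)
    (hf0 : toricMap K S ρ f ≠ 0) :
    vNumber K (beIdeal K G) ≤ d := by
  have hJ : beIdeal K G ≤ RingHom.ker (toricMap K S ρ) := by
    refine Ideal.span_le.mpr ?_
    rintro _ ⟨i, j, hij, rfl⟩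
    exact toricMap_bedge_eq_zero K (hG i j hij)
  have hker : Ideal.span (X '' cutVars S) ⊔ blockIdeal K ρ ≤
      (beIdeal K G).colon (Ideal.span {f}) := by
    refine sup_le (Ideal.span_le.mpr ?_) (Ideal.span_le.mpr ?_)
    · rintro _ ⟨_, ⟨s, hs, rfl⟩ | ⟨s, hs, rfl⟩, rfl⟩
      · exact Ideal.mem_colon_span_singleton.mpr (hS s hs).1
      · exact Ideal.mem_colon_span_singleton.mpr (hS s hs).2
    · rintro _ ⟨i, j, hρ, rfl⟩
      refine Ideal.mem_colon_span_singleton.mpr ?_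
      by_cases hi : i ∈ S
      · exact bedge_mul_mem_of_X_mul_mem K (hS i hi).1 (hS i hi).2 j
      by_cases hj : j ∈ S
      · rw [bedge_swap, neg_mul]
        exact neg_mem (bedge_mul_mem_of_X_mul_mem K (hS j hj).1 (hS j hj).2 i)
      exact hblock i j hi hj hρ
  refine vNumber_le_of_isPrime_colon K _ hf ?_
  rw [colon_span_singleton_eq_ker (toricMap K S ρ) hJ hf0 fun r hr =>
    Ideal.mem_colon_span_singleton.mp (hker (ker_toricMap_le K S ρ hr))]
  exact RingHom.ker_isPrime _

theorem vNumber_beIdeal_top {V : Type} [Fintype V] :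
    vNumber K (beIdeal K (⊤ : SimpleGraph V)) = 0 := by
  refine Nat.le_zero.mp (vNumber_beIdeal_le_of_cut K ⊤ ∅ (fun _ => ()) (isHomogeneous_one _ _)
    (fun _ _ _ => Or.inr (Or.inr rfl)) (by simp) (fun i j _ _ _ => ?_) (by simp))
  exact bedge_mul_mem_of_eq_or_adj K ((eq_or_ne i j).imp_right (SimpleGraph.top_adj _ _).mpr) 1

section Cycle

open SimpleGraph Fin.NatCast

lemma cycleGraph_adj_iff_val {n : ℕ} (hn : 2 ≤ n) {u v : Fin n} :
    (cycleGraph n).Adj u v ↔ u.val + 1 = v.val ∨ v.val + 1 = u.val ∨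
      (u.val + 1 = n ∧ v.val = 0) ∨ (v.val + 1 = n ∧ u.val = 0) := by
  have hsub : ∀ a b : Fin n, (a - b).val = 1 ↔ b.val + 1 = a.val ∨ (b.val + 1 = n ∧ a.val = 0) := by
    intro a b
    have := a.isLt
    have := b.isLt
    rcases le_or_gt b a with h | h
    · rw [Fin.coe_sub_iff_le.mpr h]
      rw [Fin.le_def] at h
      omega
    · rw [Fin.coe_sub_iff_lt.mpr h]
      rw [Fin.lt_def] at h
      omega
  rw [cycleGraph_adj', hsub, hsub]
  omega

variable {n : ℕ} [NeZero n]

def bridgeProduct (n m : ℕ) [NeZero n] : MvPolynomial (Fin n ⊕ Fin n) K :=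
  ∏ j ∈ Finset.range m, bedge K ((3 * j : ℕ) : Fin n) ((3 * j + 2 : ℕ) : Fin n)

lemma isHomogeneous_bridgeProduct (m : ℕ) : (bridgeProduct K n m).IsHomogeneous (2 * m) := by
  have h := IsHomogeneous.prod (Finset.range m) _ (fun _ => 2) fun j _ =>
    isHomogeneous_bedge K ((3 * j : ℕ) : Fin n) ((3 * j + 2 : ℕ) : Fin n)
  rwa [Finset.sum_const, Finset.card_range, smul_eq_mul, mul_comm] at h

theorem vNumber_cycleGraph_le_of_bridges (hn : 2 ≤ n) {m : ℕ} (hm : 3 * m ≤ n) (ρ : Fin n → ℕ)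
    {g : MvPolynomial (Fin n ⊕ Fin n) K} {e : ℕ} (hg : g.IsHomogeneous e)
    (hG : ∀ i j, (cycleGraph n).Adj i j → i.val % 3 = 1 ∨ j.val % 3 = 1 ∨ ρ i = ρ j)
    (hS : ∀ s : Fin n, s.val % 3 = 1 → 3 * m ≤ s.val →
      X (Sum.inl s) * g ∈ beIdeal K (cycleGraph n) ∧ X (Sum.inr s) * g ∈ beIdeal K (cycleGraph n))
    (hblock : ∀ i j : Fin n, i.val % 3 ≠ 1 → j.val % 3 ≠ 1 → ρ i = ρ j →
      bedge K i j * g ∈ beIdeal K (cycleGraph n))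
    (hρ : ∀ a b : Fin n, a.val % 3 = 0 → b.val = a.val + 2 → ρ a ≠ ρ b)
    (hg0 : toricMap K {i | i.val % 3 = 1} ρ g ≠ 0) :
    vNumber K (beIdeal K (cycleGraph n)) ≤ 2 * m + e := by
  refine vNumber_beIdeal_le_of_cut K (cycleGraph n) {i | i.val % 3 = 1} ρ
    ((isHomogeneous_bridgeProduct K m).mul hg) hG (fun s hs => ?_)
    (fun i j hi hj hij => ?_) ?_
  · rcases le_or_gt (3 * m) s.val with hsm | hsm
    · obtain ⟨hx, hy⟩ := hS s hs hsm
      rw [mul_left_comm, mul_left_comm (X _)]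
      exact ⟨Ideal.mul_mem_left _ _ hx, Ideal.mul_mem_left _ _ hy⟩
    simp only [Set.mem_ofPred_eq] at hs
    obtain ⟨j, hsj⟩ : ∃ j, s.val = 3 * j + 1 := ⟨s.val / 3, by omega⟩
    have hj : j ∈ Finset.range m := Finset.mem_range.mpr (by omega)
    have hdvd : bedge K ((3 * j : ℕ) : Fin n) ((3 * j + 2 : ℕ) : Fin n) ∣ bridgeProduct K n m * g :=
      (Finset.dvd_prod_of_mem _ hj).mul_right g
    refine X_mul_mem_of_bedge_dvd K ?_ ?_ hdvd <;>
      simp only [cycleGraph_adj_iff_val hn, Fin.val_cast_of_lt (show 3 * j < n by omega),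
        Fin.val_cast_of_lt (show 3 * j + 2 < n by omega)] <;> omega
  · rw [mul_left_comm]
    exact Ideal.mul_mem_left _ _ (hblock i j hi hj hij)
  · rw [map_mul, bridgeProduct, map_prod]
    refine mul_ne_zero (Finset.prod_ne_zero_iff.mpr fun j hj => ?_) hg0
    have hj := Finset.mem_range.mp hj
    refine toricMap_bedge_ne_zero K ?_ ?_ (hρ _ _ ?_ ?_) <;>
      simp only [Set.mem_ofPred_eq, Fin.val_cast_of_lt (show 3 * j < n by omega),
        Fin.val_cast_of_lt (show 3 * j + 2 < n by omega)] <;> omega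

lemma vNumber_cycleGraph_three_mul_le {k : ℕ} (hk : 2 ≤ k) :
    vNumber K (beIdeal K (cycleGraph (3 * k))) ≤ 2 * k := by
  have : NeZero (3 * k) := ⟨by omega⟩
  have hn : 2 ≤ 3 * k := by omega
  simpa using vNumber_cycleGraph_le_of_bridges K hn le_rfl
    (fun i => if i.val + 1 = 3 * k then 0 else (i.val + 1) / 3) (isHomogeneous_one _ _)
    (fun i j h => by rw [cycleGraph_adj_iff_val hn] at h; split_ifs <;> omega)
    (fun s _ hs => absurd s.isLt (by omega))
    (fun i j _ _ hρ => bedge_mul_mem_of_eq_or_adj K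
      (by rw [Fin.ext_iff, cycleGraph_adj_iff_val hn]; split_ifs at hρ <;> omega) 1)
    (fun a b _ _ => by split_ifs <;> omega) (by simp)

lemma vNumber_cycleGraph_three_mul_add_one_le {k : ℕ} (hk : 2 ≤ k) :
    vNumber K (beIdeal K (cycleGraph (3 * k + 1))) ≤ 2 * k + 1 := by
  have hn : 2 ≤ 3 * k + 1 := by omega
  set c : Fin (3 * k + 1) := Fin.last _
  -- the vertices `3k - 1, 3k, 0` form one block, closed up by the factor `x_{3k}`
  refine vNumber_cycleGraph_le_of_bridges K hn (by omega)
    (fun i => if 3 * k ≤ i.val + 1 then 0 else (i.val + 1) / 3) (isHomogeneous_X K (Sum.inl c))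
    (fun i j h => by rw [cycleGraph_adj_iff_val hn] at h; split_ifs <;> omega)
    (fun s hs hsk => absurd s.isLt (by omega)) (fun i j hi hj hρ => ?_)
    (fun a b _ _ => by split_ifs <;> omega) (toricMap_X_inl_ne_zero K (by simp [c]))
  have hadj : ∀ u v : Fin (3 * k + 1), (u.val + 1 = v.val ∨ v.val + 1 = u.val ∨
      (u.val = 3 * k ∧ v.val = 0) ∨ (v.val = 3 * k ∧ u.val = 0)) →
      (cycleGraph (3 * k + 1)).Adj u v := fun u v h => by
    rw [cycleGraph_adj_iff_val hn]; omega
  obtain h | ⟨hi', hj'⟩ | ⟨hi', hj'⟩ : (i = j ∨ (cycleGraph (3 * k + 1)).Adj i j) ∨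
      (i.val + 1 = 3 * k ∧ j.val = 0) ∨ (i.val = 0 ∧ j.val + 1 = 3 * k) := by
    rw [Fin.ext_iff, cycleGraph_adj_iff_val hn]; split_ifs at hρ <;> omega
  · exact bedge_mul_mem_of_eq_or_adj K h _
  all_goals
    rw [mul_comm (bedge K i j)]
    refine (X_mul_bedge_mem_of_adj K (hadj _ _ ?_) (hadj _ _ ?_)).1 <;>
      simp only [c, Fin.val_last, true_and] <;> omega

lemma vNumber_cycleGraph_three_mul_add_two_le {k : ℕ} (hk : 1 ≤ k) :
    vNumber K (beIdeal K (cycleGraph (3 * k + 2))) ≤ 2 * k + 2 := by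
  have hn : 2 ≤ 3 * k + 2 := by omega
  have hadj : ∀ u v : Fin (3 * k + 2), (u.val + 1 = v.val ∨ (u.val = 3 * k + 1 ∧ v.val = 0)) →
      (cycleGraph (3 * k + 2)).Adj u v := fun u v h => by
    rw [cycleGraph_adj_iff_val hn]; omega
  -- the last cut vertex `3k + 1` is bridged across the wrap-around by `f_{3k,0}`
  refine vNumber_cycleGraph_le_of_bridges K hn (by omega) (fun i => (i.val + 1) / 3)
    (isHomogeneous_bedge K ⟨3 * k, by omega⟩ 0)
    (fun i j h => by rw [cycleGraph_adj_iff_val hn] at h; omega)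
    (fun s hs hsk => X_mul_mem_of_bedge_dvd K (hadj _ _ ?_) (hadj _ _ ?_) dvd_rfl)
    (fun i j _ _ hρ => bedge_mul_mem_of_eq_or_adj K
      (by rw [Fin.ext_iff, cycleGraph_adj_iff_val hn]; omega) _)
    (fun a b ha hb => by omega) (toricMap_bedge_ne_zero K (by simp) (by simp) (by simp; omega))
  all_goals have := s.isLt; simp only [Fin.val_zero, and_true]; omega

lemma vNumber_cycleGraph_four_le : vNumber K (beIdeal K (cycleGraph 4)) ≤ 2 := by
  refine vNumber_beIdeal_le_of_cut K (cycleGraph 4) {i | i.val % 2 = 0} Fin.val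
    (isHomogeneous_bedge K 1 3) (fun i j h => by
      rw [cycleGraph_adj_iff_val le_add_self] at h
      show i.val % 2 = 0 ∨ j.val % 2 = 0 ∨ i.val = j.val
      omega)
    (fun s hs => X_mul_mem_of_bedge_dvd K ?_ ?_ dvd_rfl)
    (fun i j _ _ hij => bedge_mul_mem_of_eq_or_adj K (.inl (Fin.ext hij)) _)
    (toricMap_bedge_ne_zero K (by simp) (by simp) (by simp))
  all_goals
    rw [cycleGraph_adj_iff_val le_add_self]
    simp only [Set.mem_ofPred_eq] at hs
    simp only [Fin.coe_ofNat_eq_mod, true_and]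
    have := s.isLt
    omega

end Cycle

theorem statement_13 {n : ℕ} :
    vNumber K (beIdeal K (SimpleGraph.cycleGraph n)) ≤ (2 * n + 2) / 3 := by
  rcases Nat.lt_or_ge n 4 with hn | hn
  · interval_cases n <;>
      simp [SimpleGraph.cycleGraph_zero_eq_top, SimpleGraph.cycleGraph_one_eq_top,
        SimpleGraph.cycleGraph_two_eq_top, SimpleGraph.cycleGraph_three_eq_top,
        vNumber_beIdeal_top]
  obtain ⟨k, rfl | rfl | rfl⟩ : ∃ k, n = 3 * k ∨ n = 3 * k + 1 ∨ n = 3 * k + 2 := ⟨n / 3, by omega⟩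
  · exact (vNumber_cycleGraph_three_mul_le K (by omega)).trans (by omega)
  · obtain rfl | hk : k = 1 ∨ 2 ≤ k := by omega
    · exact (vNumber_cycleGraph_four_le K).trans (by norm_num)
    · exact (vNumber_cycleGraph_three_mul_add_one_le K hk).trans (by omega)
  · exact (vNumber_cycleGraph_three_mul_add_two_le K (by omega)).trans (by omega)

end

end Paper
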